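/- Let φ : ℝ → ℝ be three times continuously differentiable with φ'(x) ≠ 0 for all x, and let ψ : ℝ³ → ℝ (written ψ(x,y,p)) be three times continuously differentiable with ∂ψ/∂p (x,y,p) ≠ 0 for all (x,y,p). Then there exist continuous functions A₀, B₃, B₂, B₁, B₀ : ℝ³ → ℝ with the following property: for every open interval I, every four times continuously differentiable y : I → ℝ, and every three times continuously differentiable u : ℝ → ℝ satisfying u(φ(x)) = ψ(x, y(x), y'(x)) for all x ∈ I, one has for all x ∈ I (all coefficient functions evaluated at (x, y(x), y'(x))): u'''(φ(x)) = (ψ_p / φ'(x)³) · [ y''''(x) + ( (3 ψ_pp/ψ_p) · y''(x) + A₀ ) · y'''(x) + B₃ · y''(x)³ + B₂ · y''(x)² + B₁ · y''(x) + B₀ ], where ψ_p and ψ_pp denote the first and second partial derivatives of ψ with respect to p. -/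

import Mathlib

/-!
Let `c(x) = (x, y x, y' x)` be the prolongation of `y`. Differentiating `u ∘ φ = ψ ∘ c` up to
three times on `I` gives identities that are triangular in `u', u'', u'''` with diagonal
`φ', φ'², φ'³`; eliminating `u'` and `u''` leaves `u''' φ'³ = G₃ - 3 S G₂ + R G₁`, where `G_k` is
the `k`-th derivative of `ψ ∘ c`, `S = φ''/φ'` and `R = 3 S² - φ'''/φ'`. Since
`c' = (1, y', y'')`, `c'' = (0, y'', y''')`, `c''' = (0, y''', y'''')` and the derivatives of `ψ`
are multilinear, the right-hand side is `ψ_p y'''' + (3 ψ_pp y'' + …) y''' + (cubic in y'')`, with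
coefficients continuous in `(x, y, y')`; dividing by `ψ_p` gives the normal form.
-/

open Set

noncomputable section

section Composition

variable {u φ : ℝ → ℝ}

theorem deriv_comp_eq (hu : Differentiable ℝ u) (hφ : Differentiable ℝ φ) :
    deriv (fun x => u (φ x)) = fun x => deriv u (φ x) * deriv φ x :=
  funext fun x => ((hu _).hasDerivAt.comp x (hφ x).hasDerivAt).deriv

theorem deriv_deriv_comp_eq (hu : ContDiff ℝ 2 u) (hφ : ContDiff ℝ 2 φ) :
    deriv (deriv (fun x => u (φ x))) = fun x =>
      deriv (deriv u) (φ x) * deriv φ x ^ 2 + deriv u (φ x) * deriv (deriv φ) x := by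
  rw [deriv_comp_eq (hu.differentiable two_ne_zero) (hφ.differentiable two_ne_zero)]
  funext x
  have hu₁ := hu.deriv' (n := 1) |>.differentiable one_ne_zero
  have hφ₁ := hφ.deriv' (n := 1) |>.differentiable one_ne_zero
  refine (((hu₁ _).hasDerivAt.comp x ((hφ.differentiable two_ne_zero) x).hasDerivAt).mul
    (hφ₁ x).hasDerivAt).deriv.trans ?_
  simp only [Function.comp_apply]
  ring

theorem deriv_deriv_deriv_comp_eq (hu : ContDiff ℝ 3 u) (hφ : ContDiff ℝ 3 φ) :
    deriv (deriv (deriv (fun x => u (φ x)))) = fun x =>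
      deriv (deriv (deriv u)) (φ x) * deriv φ x ^ 3
        + 3 * deriv (deriv u) (φ x) * deriv φ x * deriv (deriv φ) x
        + deriv u (φ x) * deriv (deriv (deriv φ)) x := by
  rw [deriv_deriv_comp_eq (hu.of_le (by norm_num)) (hφ.of_le (by norm_num))]
  funext x
  have hφ₀ := hφ.differentiable three_ne_zero
  have hu₁ := hu.deriv' (n := 2) |>.differentiable two_ne_zero
  have hu₂ := hu.deriv' (n := 2) |>.deriv' (n := 1) |>.differentiable one_ne_zero
  have hφ₁ := hφ.deriv' (n := 2) |>.differentiable two_ne_zero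
  have hφ₂ := hφ.deriv' (n := 2) |>.deriv' (n := 1) |>.differentiable one_ne_zero
  refine ((((hu₂ _).hasDerivAt.comp x (hφ₀ x).hasDerivAt).mul ((hφ₁ x).hasDerivAt.pow 2)).add
    (((hu₁ _).hasDerivAt.comp x (hφ₀ x).hasDerivAt).mul (hφ₂ x).hasDerivAt)).deriv.trans ?_
  simp only [Function.comp_apply, Pi.pow_apply]
  ring

end Composition

theorem mul_pow_three_eq_of_chain_rule {a₁ a₂ a₃ f₁ f₂ f₃ g₁ g₂ g₃ : ℝ} (hf₁ : f₁ ≠ 0)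
    (h₁ : a₁ * f₁ = g₁) (h₂ : a₂ * f₁ ^ 2 + a₁ * f₂ = g₂)
    (h₃ : a₃ * f₁ ^ 3 + 3 * a₂ * f₁ * f₂ + a₁ * f₃ = g₃) :
    a₃ * f₁ ^ 3 = g₃ - 3 * (f₂ / f₁) * g₂ + (3 * (f₂ / f₁) ^ 2 - f₃ / f₁) * g₁ := by
  subst h₁ h₂ h₃
  field_simp
  ring

section Curve

variable {E F : Type*} [NormedAddCommGroup E] [NormedSpace ℝ E]
  [NormedAddCommGroup F] [NormedSpace ℝ F]
  {ψ : E → F} {c c₁ c₂ c₃ : ℝ → E} {I : Set ℝ}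

theorem eqOn_deriv_comp (hψ : Differentiable ℝ ψ) (hc : ∀ x ∈ I, HasDerivAt c (c₁ x) x) :
    EqOn (deriv (fun x => ψ (c x))) (fun x => fderiv ℝ ψ (c x) (c₁ x)) I :=
  fun x hx => ((hψ _).hasFDerivAt.comp_hasDerivAt x (hc x hx)).deriv

theorem eqOn_deriv_deriv_comp (hψ : ContDiff ℝ 2 ψ) (hI : IsOpen I)
    (hc : ∀ x ∈ I, HasDerivAt c (c₁ x) x) (hc₁ : ∀ x ∈ I, HasDerivAt c₁ (c₂ x) x) :
    EqOn (deriv (deriv (fun x => ψ (c x))))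
      (fun x => fderiv ℝ (fderiv ℝ ψ) (c x) (c₁ x) (c₁ x) + fderiv ℝ ψ (c x) (c₂ x)) I := by
  intro x hx
  rw [(eqOn_deriv_comp (hψ.differentiable two_ne_zero) hc).deriv hI hx]
  have hψ₁ := (hψ.fderiv_right (m := 1) le_rfl).differentiable one_ne_zero
  exact (((hψ₁ _).hasFDerivAt.comp_hasDerivAt x (hc x hx)).clm_apply (hc₁ x hx)).deriv

theorem eqOn_deriv_deriv_deriv_comp (hψ : ContDiff ℝ 3 ψ) (hI : IsOpen I)
    (hc : ∀ x ∈ I, HasDerivAt c (c₁ x) x) (hc₁ : ∀ x ∈ I, HasDerivAt c₁ (c₂ x) x)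
    (hc₂ : ∀ x ∈ I, HasDerivAt c₂ (c₃ x) x) :
    EqOn (deriv (deriv (deriv (fun x => ψ (c x)))))
      (fun x => fderiv ℝ (fderiv ℝ (fderiv ℝ ψ)) (c x) (c₁ x) (c₁ x) (c₁ x)
        + (3 : ℝ) • fderiv ℝ (fderiv ℝ ψ) (c x) (c₁ x) (c₂ x) + fderiv ℝ ψ (c x) (c₃ x)) I := by
  intro x hx
  rw [(eqOn_deriv_deriv_comp (hψ.of_le (by norm_num)) hI hc hc₁).deriv hI hx]
  have hψ₁ := (hψ.fderiv_right (m := 2) le_rfl).differentiable two_ne_zero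
  have hψ₂ := (hψ.fderiv_right (m := 2) le_rfl |>.fderiv_right (m := 1) le_rfl).differentiable
    one_ne_zero
  have hsymm : IsSymmSndFDerivAt ℝ ψ (c x) :=
    (hψ.of_le (by norm_num : (2 : WithTop ℕ∞) ≤ 3)).contDiffAt.isSymmSndFDerivAt (by simp)
  have hQ := (((hψ₂ _).hasFDerivAt.comp_hasDerivAt x (hc x hx)).clm_apply (hc₁ x hx)).clm_apply
    (hc₁ x hx)
  have hL := ((hψ₁ _).hasFDerivAt.comp_hasDerivAt x (hc x hx)).clm_apply (hc₂ x hx)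
  refine (hQ.add hL).deriv.trans ?_
  simp only [Function.comp_apply, add_apply, hsymm (c₂ x) (c₁ x)]
  module

end Curve

section Prolongation

variable {F : Type*} [NormedAddCommGroup F] [NormedSpace ℝ F] {I : Set ℝ} {x : ℝ}

theorem hasDerivAt_iterate_deriv {k : ℕ} {y : ℝ → F} (hy : ContDiffOn ℝ (k + 1) y I)
    (hI : IsOpen I) (hx : x ∈ I) : HasDerivAt (deriv^[k] y) (deriv^[k + 1] y x) x := by
  induction k generalizing y with
  | zero => exact ((hy.differentiableOn one_ne_zero).differentiableAt (hI.mem_nhds hx)).hasDerivAt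
  | succ k ih =>
    rw [Function.iterate_succ_apply, Function.iterate_succ_apply]
    refine ih (hy.deriv_of_isOpen hI ?_)
    push_cast
    rfl

def prolongDeriv (k : ℕ) (y : ℝ → ℝ) (x : ℝ) : ℝ × ℝ × ℝ :=
  (deriv^[k] id x, deriv^[k] y x, deriv^[k + 1] y x)

theorem hasDerivAt_prolongDeriv {k : ℕ} {y : ℝ → ℝ} (hy : ContDiffOn ℝ (k + 2) y I)
    (hI : IsOpen I) (hx : x ∈ I) :
    HasDerivAt (prolongDeriv k y) (prolongDeriv (k + 1) y x) x :=
  (hasDerivAt_iterate_deriv contDiff_id.contDiffOn isOpen_univ (mem_univ x)).prodMk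
    ((hasDerivAt_iterate_deriv (hy.of_le (by gcongr; norm_num)) hI hx).prodMk
      (hasDerivAt_iterate_deriv (by exact_mod_cast hy) hI hx))

end Prolongation

section PartialDeriv

variable {F : Type*} [NormedAddCommGroup F] [NormedSpace ℝ F] {ψ : ℝ × ℝ × ℝ → F}

theorem hasDerivAt_partial {x y p : ℝ} (hψ : DifferentiableAt ℝ ψ (x, y, p)) :
    HasDerivAt (fun q => ψ (x, y, q)) (fderiv ℝ ψ (x, y, p) (0, 0, 1)) p :=
  hψ.hasFDerivAt.comp_hasDerivAt p
    ((hasDerivAt_const _ _).prodMk ((hasDerivAt_const _ _).prodMk (hasDerivAt_id p)))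

theorem deriv_partial_eq (hψ : Differentiable ℝ ψ) (x y : ℝ) :
    deriv (fun q => ψ (x, y, q)) = fun q => fderiv ℝ ψ (x, y, q) (0, 0, 1) :=
  funext fun _ => (hasDerivAt_partial (hψ _)).deriv

theorem deriv_deriv_partial_eq (hψ : ContDiff ℝ 2 ψ) (x y p : ℝ) :
    deriv (deriv (fun q => ψ (x, y, q))) p
      = fderiv ℝ (fderiv ℝ ψ) (x, y, p) (0, 0, 1) (0, 0, 1) := by
  rw [deriv_partial_eq (hψ.differentiable two_ne_zero)]
  have hψ₁ := (hψ.fderiv_right (m := 1) le_rfl).differentiable one_ne_zero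
  simpa using ((hasDerivAt_partial (hψ₁ _)).clm_apply (hasDerivAt_const p _)).deriv

end PartialDeriv

def ratioS (φ : ℝ → ℝ) (x : ℝ) : ℝ := deriv (deriv φ) x / deriv φ x

def ratioR (φ : ℝ → ℝ) (x : ℝ) : ℝ := 3 * ratioS φ x ^ 2 - deriv (deriv (deriv φ)) x / deriv φ x

section Coefficients

variable (φ : ℝ → ℝ) (ψ : ℝ × ℝ × ℝ → ℝ)

local notation "∂¹ψ" => fderiv ℝ ψ
local notation "∂²ψ" => fderiv ℝ (fderiv ℝ ψ)
local notation "∂³ψ" => fderiv ℝ (fderiv ℝ (fderiv ℝ ψ))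
local notation "e₂" => ((0, 1, 0) : ℝ × ℝ × ℝ)
local notation "e₃" => ((0, 0, 1) : ℝ × ℝ × ℝ)

/- At `v = (x, y, p)`, `(1, p, 0)` is the part of the total derivative `∂ₓ + p ∂_y + y'' ∂_p`
that does not involve `y''`. -/
def coeffA₀ (v : ℝ × ℝ × ℝ) : ℝ :=
  (3 * ∂²ψ v (1, v.2.2, 0) e₃ + ∂¹ψ v e₂) / ∂¹ψ v e₃ - 3 * ratioS φ v.1

def coeffB₃ (v : ℝ × ℝ × ℝ) : ℝ := ∂³ψ v e₃ e₃ e₃ / ∂¹ψ v e₃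

def coeffB₂ (v : ℝ × ℝ × ℝ) : ℝ :=
  (∂³ψ v (1, v.2.2, 0) e₃ e₃ + ∂³ψ v e₃ (1, v.2.2, 0) e₃ + ∂³ψ v e₃ e₃ (1, v.2.2, 0)
    + 3 * ∂²ψ v e₃ e₂ - 3 * ratioS φ v.1 * ∂²ψ v e₃ e₃) / ∂¹ψ v e₃

def coeffB₁ (v : ℝ × ℝ × ℝ) : ℝ :=
  (∂³ψ v (1, v.2.2, 0) (1, v.2.2, 0) e₃ + ∂³ψ v (1, v.2.2, 0) e₃ (1, v.2.2, 0)
    + ∂³ψ v e₃ (1, v.2.2, 0) (1, v.2.2, 0) + 3 * ∂²ψ v (1, v.2.2, 0) e₂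
    - 3 * ratioS φ v.1 * (∂²ψ v (1, v.2.2, 0) e₃ + ∂²ψ v e₃ (1, v.2.2, 0) + ∂¹ψ v e₂))
    / ∂¹ψ v e₃ + ratioR φ v.1

def coeffB₀ (v : ℝ × ℝ × ℝ) : ℝ :=
  (∂³ψ v (1, v.2.2, 0) (1, v.2.2, 0) (1, v.2.2, 0)
    - 3 * ratioS φ v.1 * ∂²ψ v (1, v.2.2, 0) (1, v.2.2, 0)
    + ratioR φ v.1 * ∂¹ψ v (1, v.2.2, 0)) / ∂¹ψ v e₃

theorem combination_eq_mul_normalForm {x y p s t r : ℝ} (hP : ∂¹ψ (x, y, p) e₃ ≠ 0) :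
    ∂³ψ (x, y, p) (1, p, s) (1, p, s) (1, p, s) + 3 * ∂²ψ (x, y, p) (1, p, s) (0, s, t)
        + ∂¹ψ (x, y, p) (0, t, r)
      - 3 * ratioS φ x * (∂²ψ (x, y, p) (1, p, s) (1, p, s) + ∂¹ψ (x, y, p) (0, s, t))
      + ratioR φ x * ∂¹ψ (x, y, p) (1, p, s)
    = ∂¹ψ (x, y, p) e₃ * (r
        + (3 * ∂²ψ (x, y, p) e₃ e₃ / ∂¹ψ (x, y, p) e₃ * s + coeffA₀ φ ψ (x, y, p)) * t
        + coeffB₃ ψ (x, y, p) * s ^ 3 + coeffB₂ φ ψ (x, y, p) * s ^ 2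
        + coeffB₁ φ ψ (x, y, p) * s + coeffB₀ φ ψ (x, y, p)) := by
  have hV : ((1, p, s) : ℝ × ℝ × ℝ) = (1, p, 0) + s • e₃ := by simp
  have hW : ((0, s, t) : ℝ × ℝ × ℝ) = s • e₂ + t • e₃ := by simp
  have hX : ((0, t, r) : ℝ × ℝ × ℝ) = t • e₂ + r • e₃ := by simp
  rw [hV, hW, hX]
  simp only [map_add, map_smul, add_apply, smul_apply, smul_eq_mul, coeffA₀, coeffB₃, coeffB₂,
    coeffB₁, coeffB₀]
  field_simp
  ring

theorem continuous_coeffs (hφ : ContDiff ℝ 3 φ) (hφ' : ∀ x, deriv φ x ≠ 0)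
    (hψ : ContDiff ℝ 3 ψ) (hP : ∀ v, ∂¹ψ v e₃ ≠ 0) :
    Continuous (coeffA₀ φ ψ) ∧ Continuous (coeffB₃ ψ) ∧ Continuous (coeffB₂ φ ψ)
      ∧ Continuous (coeffB₁ φ ψ) ∧ Continuous (coeffB₀ φ ψ) := by
  have hφ₁ := hφ.deriv' (n := 2)
  have hφ₂ := hφ₁.deriv' (n := 1)
  have hS : Continuous (ratioS φ) := by
    unfold ratioS
    fun_prop (disch := exact hφ')
  have hR : Continuous (ratioR φ) := by
    unfold ratioR
    fun_prop (disch := exact hφ')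
  have hψ₁ := hψ.fderiv_right (m := 2) le_rfl
  have hψ₂ := hψ₁.fderiv_right (m := 1) le_rfl
  have hL := hψ₁.continuous
  have hQ := hψ₂.continuous
  have hT := hψ₂.continuous_fderiv_apply one_ne_zero
  refine ⟨?_, ?_, ?_, ?_, ?_⟩
  · unfold coeffA₀; fun_prop (disch := exact hP)
  · unfold coeffB₃; fun_prop (disch := exact hP)
  · unfold coeffB₂; fun_prop (disch := exact hP)
  · unfold coeffB₁; fun_prop (disch := exact hP)
  · unfold coeffB₀; fun_prop (disch := exact hP)

end Coefficients

/-- Fiber-preserving case of Theorem 1 / equation (8) of the paper: the pullback of `u''' = 0`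
under the tangent transformation `t = φ(x)`, `u = ψ(x, y, y')` has the form
`y'''' + (A₁ y'' + A₀) y''' + B₃ (y'')³ + B₂ (y'')² + B₁ y'' + B₀ = 0` with
leading factor `ψ_p/φ'³` and `A₁ = 3 ψ_pp/ψ_p`. -/
theorem stmt_6 (φ : ℝ → ℝ) (hφ : ContDiff ℝ 3 φ) (hφ' : ∀ x : ℝ, deriv φ x ≠ 0)
    (ψ : ℝ × ℝ × ℝ → ℝ) (hψ : ContDiff ℝ 3 ψ)
    (hψp : ∀ v : ℝ × ℝ × ℝ, deriv (fun p => ψ (v.1, v.2.1, p)) v.2.2 ≠ 0) :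
    ∃ A₀ B₃ B₂ B₁ B₀ : ℝ × ℝ × ℝ → ℝ,
      Continuous A₀ ∧ Continuous B₃ ∧ Continuous B₂ ∧ Continuous B₁ ∧ Continuous B₀ ∧
      ∀ (I : Set ℝ), IsOpen I → IsPreconnected I →
        ∀ (y : ℝ → ℝ), ContDiffOn ℝ 4 y I →
          ∀ (u : ℝ → ℝ), ContDiff ℝ 3 u →
            (∀ x ∈ I, u (φ x) = ψ (x, y x, deriv y x)) →
            ∀ x ∈ I,
              deriv (deriv (deriv u)) (φ x) =
                (deriv (fun p => ψ (x, y x, p)) (deriv y x) / (deriv φ x) ^ 3) *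
                  (deriv (deriv (deriv (deriv y))) x
                    + ((3 * deriv (deriv (fun p => ψ (x, y x, p))) (deriv y x)
                          / deriv (fun p => ψ (x, y x, p)) (deriv y x))
                          * deriv (deriv y) x
                        + A₀ (x, y x, deriv y x)) * deriv (deriv (deriv y)) x
                    + B₃ (x, y x, deriv y x) * (deriv (deriv y) x) ^ 3
                    + B₂ (x, y x, deriv y x) * (deriv (deriv y) x) ^ 2
                    + B₁ (x, y x, deriv y x) * deriv (deriv y) x
                    + B₀ (x, y x, deriv y x)) := by
  have hP (v : ℝ × ℝ × ℝ) : fderiv ℝ ψ v (0, 0, 1) ≠ 0 := by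
    simpa [deriv_partial_eq (hψ.differentiable three_ne_zero)] using hψp v
  obtain ⟨hA₀, hB₃, hB₂, hB₁, hB₀⟩ := continuous_coeffs φ ψ hφ hφ' hψ hP
  refine ⟨_, _, _, _, _, hA₀, hB₃, hB₂, hB₁, hB₀, fun I hI _ y hy u hu hpull x hx => ?_⟩
  have hc (k : ℕ) (hk : k + 2 ≤ 4 := by norm_num) (z : ℝ) (hz : z ∈ I) :
      HasDerivAt (prolongDeriv k y) (prolongDeriv (k + 1) y z) z :=
    hasDerivAt_prolongDeriv (hy.of_le (by exact_mod_cast hk)) hI hz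
  replace hpull : EqOn (fun z => u (φ z)) (fun z => ψ (prolongDeriv 0 y z)) I := hpull
  have h₁ := hpull.deriv hI hx
  have h₂ := (hpull.deriv hI).deriv hI hx
  have h₃ := ((hpull.deriv hI).deriv hI).deriv hI hx
  rw [deriv_comp_eq (hu.differentiable three_ne_zero) (hφ.differentiable three_ne_zero),
    eqOn_deriv_comp (hψ.differentiable three_ne_zero) (hc 0) hx] at h₁
  rw [deriv_deriv_comp_eq (hu.of_le (by norm_num)) (hφ.of_le (by norm_num)),
    eqOn_deriv_deriv_comp (hψ.of_le (by norm_num)) hI (hc 0) (hc 1) hx] at h₂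
  rw [deriv_deriv_deriv_comp_eq hu hφ,
    eqOn_deriv_deriv_deriv_comp hψ hI (hc 0) (hc 1) (hc 2) hx] at h₃
  have key := mul_pow_three_eq_of_chain_rule (hφ' x) h₁ h₂ h₃
  rw [deriv_deriv_partial_eq (hψ.of_le (by norm_num)),
    deriv_partial_eq (hψ.differentiable three_ne_zero), div_mul_eq_mul_div,
    eq_div_iff (pow_ne_zero 3 (hφ' x)), ← combination_eq_mul_normalForm φ ψ (hP _), key]
  simp [prolongDeriv, ratioR, ratioS]
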